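/- arXiv:2507.06522 — 3 statements merged into one kernel-verified Lean document; each statement's English description precedes it below -/
import Mathlib

section
/- Assume (H2) and (H3). Define ξ̄(x) := Σ_{p≥1} β_p² Σ_{s∈𝒮} λ_s x_s^p for x∈[0,1]^𝒮. Then ξ(𝟙) = ξ̄(𝟙), where 𝟙 = (1,…,1), and ξ(x) ≤ ξ̄(x) for every x ∈ [0,1]^𝒮. -/
open Filter

noncomputable section

namespace SpinGlass

variable {S : Type*} [Fintype S]

/-- `β_p² := Σ_{s₁,…,s_p∈𝒮} Δ²_{s₁,…,s_p} λ_{s₁}⋯λ_{s_p}`; the first argument of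
`Δsq` is the arity `p`. -/
def betasq (Δsq : (p : ℕ) → (Fin p → S) → ℝ) (lam : S → ℝ) (p : ℕ) : ℝ :=
  ∑ s : Fin p → S, Δsq p s * ∏ k, lam (s k)

/-- Covariance function `ξ(x) = Σ_{p≥1} Σ_{s₁,…,s_p} Δ²_{s₁,…,s_p} λ_{s₁}⋯λ_{s_p} x_{s₁}⋯x_{s_p}`. -/
def xiFn (Δsq : (p : ℕ) → (Fin p → S) → ℝ) (lam : S → ℝ) (x : S → ℝ) : ℝ :=
  ∑' p : ℕ, ∑ s : Fin (p + 1) → S, Δsq (p + 1) s * ∏ k, (lam (s k) * x (s k))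

/-- The comparison function `ξ̄(x) = Σ_{p≥1} β_p² Σ_s λ_s x_s^p`. -/
def xibar (Δsq : (p : ℕ) → (Fin p → S) → ℝ) (lam : S → ℝ) (x : S → ℝ) : ℝ :=
  ∑' p : ℕ, betasq Δsq lam (p + 1) * ∑ s, lam s * x s ^ (p + 1)

/-- AM-GM: for nonnegative reals, `∏ x_k ≤ Σ (1/n) x_k^n`. -/
lemma prod_le_avg_pow (n : ℕ) (hn : 0 < n) (x : Fin n → ℝ) (hx : ∀ k, 0 ≤ x k) :
    ∏ k, x k ≤ ∑ k, (1 / (n : ℝ)) * x k ^ n := by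
  have hn' : (n : ℝ) ≠ 0 := Nat.cast_ne_zero.mpr hn.ne'
  have := Real.geom_mean_le_arith_mean_weighted Finset.univ (fun _ => 1 / (n : ℝ))
    (fun k => x k ^ n) (fun _ _ => by positivity)
    (by simp [Finset.sum_const, mul_comm]; field_simp)
    (fun k _ => pow_nonneg (hx k) n)
  refine le_trans (le_of_eq ?_) this
  apply Finset.prod_congr rfl
  intro k _
  show x k = (x k ^ n) ^ ((1 : ℝ) / (n : ℝ))
  rw [← Real.rpow_natCast (x k) n, ← Real.rpow_mul (hx k)]
  rw [mul_one_div, div_self hn', Real.rpow_one]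

/-- **Proposition (key inequality).**  Under (H2) and the balanced condition (H3),
`ξ(𝟙) = ξ̄(𝟙)` and `ξ(x) ≤ ξ̄(x)` for every `x ∈ [0,1]^𝒮`. -/
theorem xi_le_xibar
    (lam : S → ℝ) (hlampos : ∀ s, 0 < lam s) (hlamsum : ∑ s, lam s = 1)
    (Δsq : (p : ℕ) → (Fin p → S) → ℝ)
    (hΔnonneg : ∀ p s, 0 ≤ Δsq p s)
    (hΔsymm : ∀ (p : ℕ) (π : Equiv.Perm (Fin p)) (s : Fin p → S), Δsq p (s ∘ π) = Δsq p s)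
    (H2 : ∃ ε > (0 : ℝ), Summable fun p : ℕ =>
      (1 + ε) ^ (p + 1) * betasq Δsq lam (p + 1))
    (H3a : ∀ t t' : S, Δsq 1 (fun _ => t) = Δsq 1 (fun _ => t'))
    (H3b : ∀ (m : ℕ) (t t' : S),
      (∑ s : Fin (m + 1) → S, Δsq (m + 2) (Fin.cons t s) * ∏ k, lam (s k)) =
        ∑ s : Fin (m + 1) → S, Δsq (m + 2) (Fin.cons t' s) * ∏ k, lam (s k)) :
    (xiFn Δsq lam fun _ => 1) = (xibar Δsq lam fun _ => 1) ∧
    ∀ x : S → ℝ, x ∈ Set.Icc (0 : S → ℝ) 1 → xiFn Δsq lam x ≤ xibar Δsq lam x := by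
  obtain ⟨ε, hε, hH2⟩ := H2
  have hβnn : ∀ p, 0 ≤ betasq Δsq lam p := fun p =>
    Finset.sum_nonneg fun s _ => mul_nonneg (hΔnonneg _ _)
      (Finset.prod_nonneg fun k _ => (hlampos _).le)
  have hβsum : Summable fun p : ℕ => betasq Δsq lam (p + 1) := by
    refine Summable.of_nonneg_of_le (fun p => hβnn _) (fun p => ?_) hH2
    have h1 : (1 : ℝ) ≤ (1 + ε) ^ (p + 1) := one_le_pow₀ (by linarith)
    nlinarith [hβnn (p + 1)]
  -- splitting a sum over tuples of length m+1
  have hsplit : ∀ (m : ℕ) (F : (Fin (m + 1) → S) → ℝ),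
      ∑ s : Fin (m + 1) → S, F s = ∑ t : S, ∑ r : Fin m → S, F (Fin.cons t r) := by
    intro m F
    have h := Fintype.sum_equiv (Fin.consEquiv fun _ => S)
      (fun tr : S × (Fin m → S) => F (Fin.cons tr.1 tr.2)) F (fun tr => rfl)
    rw [← h, Fintype.sum_prod_type]
  -- the balanced coefficients
  set c : (p : ℕ) → S → ℝ := fun p t =>
    ∑ r : Fin p → S, Δsq (p + 1) (Fin.cons t r) * ∏ k, lam (r k) with hc_def
  have hcconst : ∀ p (t t' : S), c p t = c p t' := by
    intro p t t'
    cases p with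
    | zero =>
        simp only [hc_def]
        rw [Fintype.sum_subsingleton _ (Fin.elim0 : Fin 0 → S),
          Fintype.sum_subsingleton _ (Fin.elim0 : Fin 0 → S)]
        have h1 : (Fin.cons t (Fin.elim0 : Fin 0 → S)) = fun _ : Fin 1 => t := by
          funext i
          exact Fin.cases rfl (fun j => j.elim0) i
        have h2 : (Fin.cons t' (Fin.elim0 : Fin 0 → S)) = fun _ : Fin 1 => t' := by
          funext i
          exact Fin.cases rfl (fun j => j.elim0) i
        rw [h1, h2, H3a t t']
    | succ m => exact H3b m t t'
  have hcsum : ∀ p, ∑ t, lam t * c p t = betasq Δsq lam (p + 1) := by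
    intro p
    rw [betasq, hsplit p (fun s => Δsq (p + 1) s * ∏ k, lam (s k))]
    refine Finset.sum_congr rfl fun t _ => ?_
    rw [hc_def]
    simp only [Finset.mul_sum]
    refine Finset.sum_congr rfl fun r _ => ?_
    rw [Fin.prod_univ_succ]
    simp [Fin.cons_zero, Fin.cons_succ]
    ring
  have hcval : ∀ p (t : S), c p t = betasq Δsq lam (p + 1) := by
    intro p t
    have : ∑ t', lam t' * c p t' = ∑ t', lam t' * c p t :=
      Finset.sum_congr rfl fun t' _ => by rw [hcconst p t' t]
    rw [hcsum p] at this
    rw [← Finset.sum_mul, hlamsum, one_mul] at this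
    exact this.symm
  -- per-degree terms
  set A : (p : ℕ) → (S → ℝ) → ℝ := fun p x =>
    ∑ s : Fin (p + 1) → S, Δsq (p + 1) s * ∏ k, (lam (s k) * x (s k)) with hA_def
  have hAnn : ∀ p (x : S → ℝ), (∀ s, 0 ≤ x s) → 0 ≤ A p x := by
    intro p x hx
    exact Finset.sum_nonneg fun s _ => mul_nonneg (hΔnonneg _ _)
      (Finset.prod_nonneg fun k _ => mul_nonneg (hlampos _).le (hx _))
  -- the key per-degree inequality
  have hkey : ∀ p (x : S → ℝ), x ∈ Set.Icc (0 : S → ℝ) 1 →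
      A p x ≤ betasq Δsq lam (p + 1) * ∑ t, lam t * x t ^ (p + 1) := by
    intro p x hx
    obtain ⟨hx0, hx1⟩ := hx
    have hx0' : ∀ s, 0 ≤ x s := fun s => hx0 s
    have hx1' : ∀ s, x s ≤ 1 := fun s => hx1 s
    -- Step 1 : AM-GM termwise
    have step1 : A p x ≤ ∑ s : Fin (p + 1) → S, (Δsq (p + 1) s * ∏ k, lam (s k)) *
        ∑ j : Fin (p + 1), (1 / ((p : ℝ) + 1)) * x (s j) ^ (p + 1) := by
      refine Finset.sum_le_sum fun s _ => ?_
      rw [Finset.prod_mul_distrib, ← mul_assoc]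
      refine mul_le_mul_of_nonneg_left ?_
        (mul_nonneg (hΔnonneg _ _) (Finset.prod_nonneg fun k _ => (hlampos _).le))
      have := prod_le_avg_pow (p + 1) (Nat.succ_pos p) (fun k => x (s k))
        (fun k => hx0' _)
      simpa using this
    -- Step 2 : symmetrization
    have step2 : ∀ j : Fin (p + 1),
        ∑ s : Fin (p + 1) → S, (Δsq (p + 1) s * ∏ k, lam (s k)) * x (s j) ^ (p + 1) =
        ∑ s : Fin (p + 1) → S, (Δsq (p + 1) s * ∏ k, lam (s k)) * x (s 0) ^ (p + 1) := by
      intro j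
      set π : Equiv.Perm (Fin (p + 1)) := Equiv.swap 0 j with hπ
      refine Fintype.sum_equiv (Equiv.arrowCongr π.symm (Equiv.refl S)) _ _ fun s => ?_
      have he : (Equiv.arrowCongr π.symm (Equiv.refl S)) s = s ∘ π := rfl
      rw [he, hΔsymm (p + 1) π s]
      have hprod : ∏ k, lam ((s ∘ π) k) = ∏ k, lam (s k) :=
        Equiv.prod_comp π fun k => lam (s k)
      rw [hprod]
      have : (s ∘ π) 0 = s j := by simp [hπ, Equiv.swap_apply_left]
      rw [this]
    -- Step 3 : identify the symmetrized sum
    have step3 : ∑ s : Fin (p + 1) → S, (Δsq (p + 1) s * ∏ k, lam (s k)) * x (s 0) ^ (p + 1) =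
        betasq Δsq lam (p + 1) * ∑ t, lam t * x t ^ (p + 1) := by
      rw [hsplit p (fun s => (Δsq (p + 1) s * ∏ k, lam (s k)) * x (s 0) ^ (p + 1))]
      rw [Finset.mul_sum]
      refine Finset.sum_congr rfl fun t _ => ?_
      have : ∀ r : Fin p → S,
          (Δsq (p + 1) (Fin.cons t r) * ∏ k, lam ((Fin.cons t r : Fin (p + 1) → S) k)) *
            x ((Fin.cons t r : Fin (p + 1) → S) 0) ^ (p + 1) =
          lam t * x t ^ (p + 1) * (Δsq (p + 1) (Fin.cons t r) * ∏ k, lam (r k)) := by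
        intro r
        rw [Fin.prod_univ_succ]
        simp [Fin.cons_zero, Fin.cons_succ]
        ring
      rw [Finset.sum_congr rfl fun r _ => this r, ← Finset.mul_sum,
        show (∑ r : Fin p → S, Δsq (p + 1) (Fin.cons t r) * ∏ k, lam (r k)) =
          betasq Δsq lam (p + 1) from hcval p t]
      ring
    calc A p x ≤ ∑ s : Fin (p + 1) → S, (Δsq (p + 1) s * ∏ k, lam (s k)) *
        ∑ j : Fin (p + 1), (1 / ((p : ℝ) + 1)) * x (s j) ^ (p + 1) := step1
      _ = ∑ j : Fin (p + 1), (1 / ((p : ℝ) + 1)) *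
          ∑ s : Fin (p + 1) → S, (Δsq (p + 1) s * ∏ k, lam (s k)) * x (s j) ^ (p + 1) := by
          simp_rw [Finset.mul_sum]
          rw [Finset.sum_comm]
          refine Finset.sum_congr rfl fun j _ =>
            Finset.sum_congr rfl fun s _ => by ring
      _ = ∑ j : Fin (p + 1), (1 / ((p : ℝ) + 1)) *
          ∑ s : Fin (p + 1) → S, (Δsq (p + 1) s * ∏ k, lam (s k)) * x (s 0) ^ (p + 1) := by
          refine Finset.sum_congr rfl fun j _ => by rw [step2 j]
      _ = ∑ s : Fin (p + 1) → S, (Δsq (p + 1) s * ∏ k, lam (s k)) * x (s 0) ^ (p + 1) := by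
          rw [Finset.sum_const, Finset.card_univ, Fintype.card_fin, nsmul_eq_mul]
          have hne : ((p : ℝ) + 1) ≠ 0 := by positivity
          push_cast
          field_simp
      _ = betasq Δsq lam (p + 1) * ∑ t, lam t * x t ^ (p + 1) := step3
  -- sums of lam * x^n are in [0,1]
  have hxin : ∀ (x : S → ℝ), x ∈ Set.Icc (0 : S → ℝ) 1 → ∀ n : ℕ,
      0 ≤ (∑ t, lam t * x t ^ n) ∧ (∑ t, lam t * x t ^ n) ≤ 1 := by
    intro x hx n
    obtain ⟨hx0, hx1⟩ := hx
    constructor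
    · exact Finset.sum_nonneg fun t _ => mul_nonneg (hlampos t).le (pow_nonneg (hx0 t) n)
    · rw [← hlamsum]
      refine Finset.sum_le_sum fun t _ => ?_
      have : x t ^ n ≤ 1 := pow_le_one₀ (hx0 t) (hx1 t)
      nlinarith [(hlampos t).le]
  -- summability of the comparison terms
  have hbarsum : ∀ (x : S → ℝ), x ∈ Set.Icc (0 : S → ℝ) 1 →
      Summable fun p : ℕ => betasq Δsq lam (p + 1) * ∑ t, lam t * x t ^ (p + 1) := by
    intro x hx
    refine Summable.of_nonneg_of_le (fun p => mul_nonneg (hβnn _) (hxin x hx _).1)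
      (fun p => ?_) hβsum
    have := (hxin x hx (p + 1)).2
    nlinarith [hβnn (p + 1)]
  have h1mem : (fun _ : S => (1 : ℝ)) ∈ Set.Icc (0 : S → ℝ) 1 :=
    ⟨fun s => zero_le_one, fun s => le_refl 1⟩
  have hAsum : ∀ (x : S → ℝ), x ∈ Set.Icc (0 : S → ℝ) 1 →
      Summable fun p : ℕ => A p x := by
    intro x hx
    refine Summable.of_nonneg_of_le (fun p => hAnn p x hx.1) (fun p => ?_) (hbarsum x hx)
    exact hkey p x hx
  constructor
  · -- equality at x = 1
    rw [xiFn, xibar]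
    refine tsum_congr fun p => ?_
    have hL : ∑ s : Fin (p + 1) → S, Δsq (p + 1) s * ∏ k, (lam (s k) * (1 : ℝ)) =
        betasq Δsq lam (p + 1) := by
      rw [betasq]
      refine Finset.sum_congr rfl fun s _ => ?_
      simp
    have hR : ∑ t, lam t * (1 : ℝ) ^ (p + 1) = 1 := by simpa using hlamsum
    rw [hL, hR, mul_one]
  · intro x hx
    rw [xiFn, xibar]
    exact Summable.tsum_le_tsum (fun p => hkey p x hx) (hAsum x hx) (hbarsum x hx)

end SpinGlass
end
end

section
/- Fix an integer p ≥ 1. Let 𝒮 be a finite set, let λ = (λ_s)_{s∈𝒮} be positive reals with Σ_{s∈𝒮} λ_s = 1, and let (Δ²_{s₁,…,s_p})_{s₁,…,s_p∈𝒮} be nonnegative reals, symmetric under permutations of the indices, such that Σ_{s₂,…,s_p∈𝒮} Δ²_{t,s₂,…,s_p} λ_{s₂}⋯λ_{s_p} does not depend on t∈𝒮. Set β_p² := Σ_{s₁,…,s_p∈𝒮} Δ²_{s₁,…,s_p} λ_{s₁}⋯λ_{s_p}. Then for every x ∈ [0,1]^𝒮: Σ_{s₁,…,s_p∈𝒮}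 Δ²_{s₁,…,s_p} λ_{s₁}⋯λ_{s_p} x_{s₁}⋯x_{s_p} ≤ β_p² · Σ_{s∈𝒮} λ_s x_s^p. -/
noncomputable section

namespace SpinGlass

/-- AM-GM: for nonnegative reals indexed by `Fin p`, `∏ x_k ≤ (∑ x_k ^ p) / p`. -/
lemma amgm_pow {p : ℕ} (hp : 0 < p) (y : Fin p → ℝ) (hy : ∀ k, 0 ≤ y k) :
    ∏ k, y k ≤ (∑ k, y k ^ p) / p := by
  have hp' : (p : ℝ) ≠ 0 := Nat.cast_ne_zero.mpr hp.ne'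
  have hp0 : (0 : ℝ) < p := Nat.cast_pos.mpr hp
  have h := Real.geom_mean_le_arith_mean_weighted Finset.univ
      (fun _ : Fin p => 1 / p) (fun k => y k ^ p)
      (fun i _ => by positivity)
      (by simp [Finset.sum_const, mul_one_div, hp'])
      (fun i _ => pow_nonneg (hy i) p)
  have hL : ∀ k : Fin p, (y k ^ p : ℝ) ^ ((1 : ℝ) / p) = y k := by
    intro k
    rw [← Real.rpow_natCast (y k) p, ← Real.rpow_mul (hy k)]
    rw [mul_one_div, div_self hp', Real.rpow_one]
  calc ∏ k, y k = ∏ k, (y k ^ p : ℝ) ^ ((1 : ℝ) / p) := by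
        simp only [hL]
    _ ≤ ∑ k, (1 / p : ℝ) * y k ^ p := h
    _ = (∑ k, y k ^ p) / p := by
        rw [← Finset.mul_sum]; ring

/-- Sum over tuples splits via `Fin.cons`. -/
lemma sum_tuple_cons {S : Type*} [Fintype S] {m : ℕ} (f : (Fin (m + 1) → S) → ℝ) :
    ∑ v : Fin (m + 1) → S, f v = ∑ t : S, ∑ w : Fin m → S, f (Fin.cons t w) := by
  rw [← Equiv.sum_comp (Fin.consEquiv (fun _ : Fin (m + 1) => S)) f, Fintype.sum_prod_type]
  rfl

/-- **Per-degree comparison inequality.**  For a fixed arity `p = m+1`, a balanced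
symmetric nonnegative array `Δ²` and `x ∈ [0,1]^𝒮`,
`Σ_{s₁,…,s_p} Δ²_{s₁,…,s_p} λ_{s₁}⋯λ_{s_p} x_{s₁}⋯x_{s_p} ≤ β_p² Σ_s λ_s x_s^p`. -/
theorem per_degree_comparison
    {S : Type*} [Fintype S]
    (m : ℕ)
    (lam : S → ℝ) (hlampos : ∀ s, 0 < lam s) (hlamsum : ∑ s, lam s = 1)
    (Δsq : (Fin (m + 1) → S) → ℝ)
    (hΔnonneg : ∀ v, 0 ≤ Δsq v)
    (hΔsymm : ∀ (π : Equiv.Perm (Fin (m + 1))) (v : Fin (m + 1) → S), Δsq (v ∘ π) = Δsq v)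
    (hbal : ∀ t t' : S,
      (∑ v : Fin m → S, Δsq (Fin.cons t v) * ∏ k, lam (v k)) =
        ∑ v : Fin m → S, Δsq (Fin.cons t' v) * ∏ k, lam (v k))
    (x : S → ℝ) (hx : x ∈ Set.Icc (0 : S → ℝ) 1) :
    (∑ v : Fin (m + 1) → S, Δsq v * ∏ k, (lam (v k) * x (v k))) ≤
      (∑ v : Fin (m + 1) → S, Δsq v * ∏ k, lam (v k)) * ∑ t, lam t * x t ^ (m + 1) := by
  obtain ⟨hx0, hx1⟩ := hx
  have hx0' : ∀ s, 0 ≤ x s := fun s => hx0 s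
  cases isEmpty_or_nonempty S with
  | inl h =>
    have : IsEmpty (Fin (m + 1) → S) := ⟨fun v => (h.false (v 0))⟩
    simp
  | inr h =>
  obtain ⟨t₀⟩ := h
  have hppos : 0 < m + 1 := Nat.succ_pos m
  have hpne : ((m + 1 : ℕ) : ℝ) ≠ 0 := Nat.cast_ne_zero.mpr hppos.ne'
  set C : ℝ := ∑ w : Fin m → S, Δsq (Fin.cons t₀ w) * ∏ k, lam (w k) with hC
  have hnn : ∀ v : Fin (m + 1) → S, 0 ≤ Δsq v * ∏ k, lam (v k) := fun v =>
    mul_nonneg (hΔnonneg v) (Finset.prod_nonneg fun k _ => (hlampos (v k)).le)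
  -- Step 1: AM-GM bound
  have step1 : (∑ v : Fin (m + 1) → S, Δsq v * ∏ k, (lam (v k) * x (v k))) ≤
      ∑ v : Fin (m + 1) → S,
        Δsq v * (∏ k, lam (v k)) * ((∑ k, x (v k) ^ (m + 1)) / (m + 1)) := by
    apply Finset.sum_le_sum
    intro v _
    rw [Finset.prod_mul_distrib, ← mul_assoc]
    have h := amgm_pow hppos (fun k => x (v k)) (fun k => hx0' (v k))
    push_cast at h
    exact mul_le_mul_of_nonneg_left h (hnn v)
  -- Step 2: symmetrization: each k-slot contributes equally
  have step2 : ∀ k : Fin (m + 1),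
      (∑ v : Fin (m + 1) → S, Δsq v * (∏ j, lam (v j)) * x (v k) ^ (m + 1)) =
        ∑ v : Fin (m + 1) → S, Δsq v * (∏ j, lam (v j)) * x (v 0) ^ (m + 1) := by
    intro k
    set π : Equiv.Perm (Fin (m + 1)) := Equiv.swap 0 k with hπ
    have hbij : Function.Bijective (fun v : Fin (m + 1) → S => v ∘ π) :=
      (Equiv.arrowCongr π.symm (Equiv.refl S)).bijective
    refine (Fintype.sum_bijective _ hbij
      (fun v => Δsq v * (∏ j, lam (v j)) * x (v k) ^ (m + 1))
      (fun v => Δsq v * (∏ j, lam (v j)) * x (v 0) ^ (m + 1)) ?_)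
    intro v
    have h1 : Δsq (v ∘ π) = Δsq v := hΔsymm π v
    have h2 : (∏ j, lam ((v ∘ π) j)) = ∏ j, lam (v j) :=
      Equiv.prod_comp π (fun j => lam (v j))
    have h3 : (v ∘ π) 0 = v k := by
      simp [hπ, Equiv.swap_apply_left]
    simp only [h1, h2, h3]
  -- Step 3: compute ∑ v, Δsq v * ∏ λ * x(v 0)^p = C * ∑ t, λ t x t ^ p
  have step3 : (∑ v : Fin (m + 1) → S, Δsq v * (∏ j, lam (v j)) * x (v 0) ^ (m + 1)) =
      C * ∑ t, lam t * x t ^ (m + 1) := by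
    rw [sum_tuple_cons (fun v => Δsq v * (∏ j, lam (v j)) * x (v 0) ^ (m + 1))]
    have key : ∀ t : S, (∑ w : Fin m → S,
        Δsq (Fin.cons t w) * (∏ j, lam ((Fin.cons t w : Fin (m + 1) → S) j))
          * x ((Fin.cons t w : Fin (m + 1) → S) 0) ^ (m + 1))
        = lam t * x t ^ (m + 1) * C := by
      intro t
      have key2 : ∀ w : Fin m → S,
          Δsq (Fin.cons t w) * (∏ j, lam ((Fin.cons t w : Fin (m + 1) → S) j))
            * x ((Fin.cons t w : Fin (m + 1) → S) 0) ^ (m + 1)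
            = lam t * x t ^ (m + 1) * (Δsq (Fin.cons t w) * ∏ j, lam (w j)) := by
        intro w
        rw [Fin.prod_univ_succ]
        simp only [Fin.cons_zero, Fin.cons_succ]
        ring
      rw [Finset.sum_congr rfl (fun w _ => key2 w), ← Finset.mul_sum, hC, ← hbal t t₀]
    rw [Finset.sum_congr rfl (fun t _ => key t), ← Finset.sum_mul]
    ring
  -- Step 4: the coefficient equals C
  have step4 : (∑ v : Fin (m + 1) → S, Δsq v * ∏ k, lam (v k)) = C := by
    rw [sum_tuple_cons (fun v => Δsq v * ∏ k, lam (v k))]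
    have key : ∀ t : S,
        (∑ w : Fin m → S, Δsq (Fin.cons t w) * ∏ k, lam ((Fin.cons t w : Fin (m + 1) → S) k))
        = lam t * C := by
      intro t
      have key2 : ∀ w : Fin m → S,
          Δsq (Fin.cons t w) * ∏ k, lam ((Fin.cons t w : Fin (m + 1) → S) k)
            = lam t * (Δsq (Fin.cons t w) * ∏ k, lam (w k)) := by
        intro w
        rw [Fin.prod_univ_succ]
        simp only [Fin.cons_zero, Fin.cons_succ]
        ring
      rw [Finset.sum_congr rfl (fun w _ => key2 w), ← Finset.mul_sum, hC, ← hbal t t₀]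
    rw [Finset.sum_congr rfl (fun t _ => key t), ← Finset.sum_mul, hlamsum, one_mul]
  -- combine
  refine step1.trans_eq ?_
  have e1 : ∀ v : Fin (m + 1) → S,
      Δsq v * (∏ k, lam (v k)) * ((∑ k, x (v k) ^ (m + 1)) / (m + 1))
      = ∑ k : Fin (m + 1),
          (1 / (m + 1 : ℝ)) * (Δsq v * (∏ j, lam (v j)) * x (v k) ^ (m + 1)) := by
    intro v
    rw [Finset.sum_div, Finset.mul_sum]
    exact Finset.sum_congr rfl fun k _ => by ring
  have expand : (∑ v : Fin (m + 1) → S,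
        Δsq v * (∏ k, lam (v k)) * ((∑ k, x (v k) ^ (m + 1)) / (m + 1)))
      = (1 / (m + 1 : ℝ)) * ∑ k : Fin (m + 1),
          ∑ v : Fin (m + 1) → S, Δsq v * (∏ j, lam (v j)) * x (v k) ^ (m + 1) := by
    rw [Finset.sum_congr rfl (fun v _ => e1 v), Finset.sum_comm, Finset.mul_sum]
    exact Finset.sum_congr rfl fun k _ => (Finset.mul_sum _ _ _).symm
  rw [expand]
  rw [Finset.sum_congr rfl (fun k _ => step2 k), Finset.sum_const, Finset.card_univ,
    Fintype.card_fin, nsmul_eq_mul, step3, step4]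
  have : ((m + 1 : ℕ) : ℝ) ≠ 0 := hpne
  push_cast at this ⊢
  field_simp
end SpinGlass
end
end

section
/- Assume (H2) and (H3). Let k ≥ 1, let m satisfy 0 = m₀ < m₁ < ⋯ < m_k = 1, let q satisfy 0 = q₀ ≤ q₁ ≤ ⋯ ≤ q_k ≤ q_{k+1} = 1, and let q̂ be the diagonal array q̂_{j,s} := q_j for all j∈{0,…,k+1} and s∈𝒮. Then the multi-species spherical Parisi functional satisfies 𝒫_spherical(m, q̂) = 𝒫^single_spherical(m, q), where 𝒫^single_spherical is the same functional computed with a single species and covariance function ξ^single(x) = Σ_{p≥1} β_p² x^p. -/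
open MeasureTheory ProbabilityTheory

noncomputable section

namespace SpinGlass

variable {S : Type*} [Fintype S]

/-- Per-species derivative `ξ^s(x) = (1/λ_s)·∂ξ/∂x_s(x)
= Σ_{p≥1} p Σ_{s₂,…,s_p} Δ²_{s,s₂,…,s_p} λ_{s₂}⋯λ_{s_p} x_{s₂}⋯x_{s_p}`. -/
def xiDerivS (Δsq : (p : ℕ) → (Fin p → S) → ℝ) (lam : S → ℝ) (s : S) (x : S → ℝ) : ℝ :=
  ∑' p : ℕ, ((p : ℝ) + 1) *
    ∑ v : Fin p → S, Δsq (p + 1) (Fin.cons s v) * ∏ k, (lam (v k) * x (v k))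

/-- `θ(x) = Σ_{p≥1}(p−1) Σ_{s₁,…,s_p} Δ²_{s₁,…,s_p} λ_{s₁}⋯λ_{s_p} x_{s₁}⋯x_{s_p}
= Σ_s x_s ∂ξ/∂x_s(x) − ξ(x)`. -/
def thetaFn (Δsq : (p : ℕ) → (Fin p → S) → ℝ) (lam : S → ℝ) (x : S → ℝ) : ℝ :=
  ∑' p : ℕ, (p : ℝ) * ∑ s : Fin (p + 1) → S, Δsq (p + 1) s * ∏ k, (lam (s k) * x (s k))

/-- Single-species covariance function `ξ^single(x) = Σ_{p≥1} β_p² x^p`. -/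
def xiSingle (bsq : ℕ → ℝ) (x : ℝ) : ℝ := ∑' p : ℕ, bsq (p + 1) * x ^ (p + 1)

/-- `(ξ^single)′(x) = Σ_{p≥1} p β_p² x^{p−1}`. -/
def xiSingleDeriv (bsq : ℕ → ℝ) (x : ℝ) : ℝ :=
  ∑' p : ℕ, ((p : ℝ) + 1) * bsq (p + 1) * x ^ p

/-- `d_{j,s} = Σ_{j'=j}^{k} m_{j'}(ξ^s(q_{j'+1}) − ξ^s(q_{j'}))` (so `d_{k+1,s} = 0`),
for a given species functional `xs = ξ^s`. -/
def dcoef (k : ℕ) (m : ℕ → ℝ) (xs : (S → ℝ) → ℝ) (q : ℕ → S → ℝ) (j : ℕ) : ℝ :=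
  ∑ j' ∈ Finset.Icc j k, m j' * (xs (q (j' + 1)) - xs (q j'))

/-- `X_s(b) = b − 1 − log b + ξ^s(q₁)/(b − d_{1,s})
+ Σ_{j=1}^{k} (1/m_j) log((b − d_{j+1,s})/(b − d_{j,s}))`. -/
def sphX (k : ℕ) (m : ℕ → ℝ) (xs : (S → ℝ) → ℝ) (q : ℕ → S → ℝ) (b : ℝ) : ℝ :=
  b - 1 - Real.log b + xs (q 1) / (b - dcoef k m xs q 1) +
    ∑ j ∈ Finset.Icc 1 k, (m j)⁻¹ *
      Real.log ((b - dcoef k m xs q (j + 1)) / (b - dcoef k m xs q j))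

/-- The spherical Parisi functional
`𝒫(m,q) = Σ_s λ_s inf_{b > d_{1,s}} X_s(b) − ½ Σ_{j=1}^{k} m_j(θ(q_{j+1}) − θ(q_j))`,
for given per-species derivative functionals `xs s` and correction `θ`. -/
def parisiSpherical (lam : S → ℝ) (k : ℕ) (m : ℕ → ℝ)
    (xs : S → (S → ℝ) → ℝ) (θ : (S → ℝ) → ℝ) (q : ℕ → S → ℝ) : ℝ :=
  (∑ s, lam s *
      sInf (sphX k m (xs s) q '' Set.Ioi (dcoef k m (xs s) q 1))) -
    (1 / 2) * ∑ j ∈ Finset.Icc 1 k, m j * (θ (q (j + 1)) - θ (q j))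


section AuxLemmas

lemma betasq_succ (Δsq : (p : ℕ) → (Fin p → S) → ℝ) (lam : S → ℝ) (p : ℕ) :
    betasq Δsq lam (p + 1) =
      ∑ t : S, lam t * ∑ v : Fin p → S, Δsq (p + 1) (Fin.cons t v) * ∏ k, lam (v k) := by
  rw [betasq,
    ← Fintype.sum_equiv (Fin.consEquiv fun _ : Fin (p + 1) => S)
      (fun tv : S × (Fin p → S) =>
        Δsq (p + 1) (Fin.cons tv.1 tv.2) *
          ∏ k, lam ((Fin.cons tv.1 tv.2 : Fin (p + 1) → S) k))
      (fun u => Δsq (p + 1) u * ∏ k, lam (u k)) (fun tv => rfl),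
    Fintype.sum_prod_type]
  refine Finset.sum_congr rfl fun t _ => ?_
  rw [Finset.mul_sum]
  refine Finset.sum_congr rfl fun v _ => ?_
  rw [Fin.prod_univ_succ]
  simp only [Fin.cons_zero, Fin.cons_succ]
  ring

lemma sum_cons_eq_betasq (Δsq : (p : ℕ) → (Fin p → S) → ℝ) (lam : S → ℝ)
    (hlamsum : ∑ s, lam s = 1)
    (H3a : ∀ t t' : S, Δsq 1 (fun _ => t) = Δsq 1 (fun _ => t'))
    (H3b : ∀ (n : ℕ) (t t' : S),
      (∑ s : Fin (n + 1) → S, Δsq (n + 2) (Fin.cons t s) * ∏ k, lam (s k)) =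
        ∑ s : Fin (n + 1) → S, Δsq (n + 2) (Fin.cons t' s) * ∏ k, lam (s k))
    (s : S) (p : ℕ) :
    ∑ v : Fin p → S, Δsq (p + 1) (Fin.cons s v) * ∏ k, lam (v k)
      = betasq Δsq lam (p + 1) := by
  have hindep : ∀ t : S,
      (∑ v : Fin p → S, Δsq (p + 1) (Fin.cons t v) * ∏ k, lam (v k))
        = ∑ v : Fin p → S, Δsq (p + 1) (Fin.cons s v) * ∏ k, lam (v k) := by
    intro t
    cases p with
    | zero =>
        have h1 : ∀ u : S,
            (∑ v : Fin 0 → S, Δsq 1 (Fin.cons u v) * ∏ k, lam (v k))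
              = Δsq 1 (fun _ => u) := by
          intro u
          rw [Fintype.sum_unique]
          have h2 : (Fin.cons u (default : Fin 0 → S) : Fin 1 → S) = fun _ => u := by
            funext i
            have hi : i = 0 := Fin.fin_one_eq_zero i
            rw [hi, Fin.cons_zero]
          simp [h2]
        rw [h1, h1, H3a t s]
    | succ n => exact H3b n t s
  rw [betasq_succ]
  symm
  calc ∑ t : S, lam t * ∑ v : Fin p → S, Δsq (p + 1) (Fin.cons t v) * ∏ k, lam (v k)
      = ∑ t : S, lam t * ∑ v : Fin p → S, Δsq (p + 1) (Fin.cons s v) * ∏ k, lam (v k) :=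
        Finset.sum_congr rfl fun t _ => by rw [hindep t]
    _ = (∑ t : S, lam t) * ∑ v : Fin p → S, Δsq (p + 1) (Fin.cons s v) * ∏ k, lam (v k) :=
        (Finset.sum_mul _ _ _).symm
    _ = _ := by rw [hlamsum, one_mul]

lemma xiDerivS_const (Δsq : (p : ℕ) → (Fin p → S) → ℝ) (lam : S → ℝ)
    (hlamsum : ∑ s, lam s = 1)
    (H3a : ∀ t t' : S, Δsq 1 (fun _ => t) = Δsq 1 (fun _ => t'))
    (H3b : ∀ (n : ℕ) (t t' : S),
      (∑ s : Fin (n + 1) → S, Δsq (n + 2) (Fin.cons t s) * ∏ k, lam (s k)) =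
        ∑ s : Fin (n + 1) → S, Δsq (n + 2) (Fin.cons t' s) * ∏ k, lam (s k))
    (s : S) (c : ℝ) :
    xiDerivS Δsq lam s (fun _ => c) = xiSingleDeriv (betasq Δsq lam) c := by
  refine tsum_congr fun p => ?_
  have h1 : ∀ v : Fin p → S, (∏ k, (lam (v k) * c)) = (∏ k, lam (v k)) * c ^ p := by
    intro v
    rw [Finset.prod_mul_distrib, Finset.prod_const, Finset.card_univ, Fintype.card_fin]
  have h2 : (∑ v : Fin p → S, Δsq (p + 1) (Fin.cons s v) * ∏ k, (lam (v k) * c))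
      = (∑ v : Fin p → S, Δsq (p + 1) (Fin.cons s v) * ∏ k, lam (v k)) * c ^ p := by
    rw [Finset.sum_mul]
    exact Finset.sum_congr rfl fun v _ => by rw [h1]; ring
  rw [h2, sum_cons_eq_betasq Δsq lam hlamsum H3a H3b s p]
  ring

lemma betasq_nonneg (Δsq : (p : ℕ) → (Fin p → S) → ℝ) (lam : S → ℝ)
    (hΔnonneg : ∀ p s, 0 ≤ Δsq p s) (hlampos : ∀ s, 0 < lam s) (p : ℕ) :
    0 ≤ betasq Δsq lam p :=
  Finset.sum_nonneg fun v _ => mul_nonneg (hΔnonneg _ _)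
    (Finset.prod_nonneg fun k _ => (hlampos _).le)

lemma thetaFn_const (Δsq : (p : ℕ) → (Fin p → S) → ℝ) (lam : S → ℝ)
    (hΔnonneg : ∀ p s, 0 ≤ Δsq p s) (hlampos : ∀ s, 0 < lam s)
    (H2 : ∃ ε > (0 : ℝ), Summable fun p : ℕ =>
      (1 + ε) ^ (p + 1) * betasq Δsq lam (p + 1))
    (c : ℝ) (hc0 : 0 ≤ c) (hc1 : c ≤ 1) :
    thetaFn Δsq lam (fun _ => c)
      = c * xiSingleDeriv (betasq Δsq lam) c - xiSingle (betasq Δsq lam) c := by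
  obtain ⟨ε, hε, hsum⟩ := H2
  have hβ := betasq_nonneg Δsq lam hΔnonneg hlampos
  have hε1 : (1 : ℝ) ≤ 1 + ε := by linarith
  have hcp : ∀ n : ℕ, c ^ n ≤ 1 := fun n => pow_le_one₀ hc0 hc1
  have hSg : Summable fun p : ℕ => betasq Δsq lam (p + 1) * c ^ (p + 1) := by
    refine Summable.of_nonneg_of_le
      (fun p => mul_nonneg (hβ _) (pow_nonneg hc0 _)) (fun p => ?_) hsum
    calc betasq Δsq lam (p + 1) * c ^ (p + 1) ≤ betasq Δsq lam (p + 1) * 1 :=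
          mul_le_mul_of_nonneg_left (hcp _) (hβ _)
      _ ≤ (1 + ε) ^ (p + 1) * betasq Δsq lam (p + 1) := by
          rw [mul_one]
          nlinarith [one_le_pow₀ hε1 (n := p + 1), hβ (p + 1)]
  have hSf : Summable fun p : ℕ => ((p : ℝ) + 1) * betasq Δsq lam (p + 1) * c ^ p := by
    refine Summable.of_nonneg_of_le
      (fun p => mul_nonneg (mul_nonneg (by positivity) (hβ _)) (pow_nonneg hc0 _))
      (fun p => ?_) (hsum.mul_left ε⁻¹)
    have hber : 1 + ((p : ℝ) + 1) * ε ≤ (1 + ε) ^ (p + 1) := by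
      have := one_add_mul_le_pow (a := ε) (by linarith) (p + 1)
      push_cast at this ⊢
      linarith
    have hX : ((p : ℝ) + 1) * ε ≤ (1 + ε) ^ (p + 1) := by nlinarith
    have h1 : ((p : ℝ) + 1) ≤ ε⁻¹ * (1 + ε) ^ (p + 1) :=
      calc ((p : ℝ) + 1) = ε⁻¹ * (((p : ℝ) + 1) * ε) := by field_simp
        _ ≤ ε⁻¹ * (1 + ε) ^ (p + 1) :=
            mul_le_mul_of_nonneg_left hX (by positivity)
    calc ((p : ℝ) + 1) * betasq Δsq lam (p + 1) * c ^ p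
        ≤ ((p : ℝ) + 1) * betasq Δsq lam (p + 1) * 1 :=
          mul_le_mul_of_nonneg_left (hcp _) (mul_nonneg (by positivity) (hβ _))
      _ = ((p : ℝ) + 1) * betasq Δsq lam (p + 1) := mul_one _
      _ ≤ (ε⁻¹ * (1 + ε) ^ (p + 1)) * betasq Δsq lam (p + 1) :=
          mul_le_mul_of_nonneg_right h1 (hβ _)
      _ = ε⁻¹ * ((1 + ε) ^ (p + 1) * betasq Δsq lam (p + 1)) := by ring
  have hterm : ∀ p : ℕ,
      (p : ℝ) * ∑ u : Fin (p + 1) → S, Δsq (p + 1) u * ∏ k, (lam (u k) * c)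
        = c * (((p : ℝ) + 1) * betasq Δsq lam (p + 1) * c ^ p)
          - betasq Δsq lam (p + 1) * c ^ (p + 1) := by
    intro p
    have h1 : ∀ u : Fin (p + 1) → S,
        (∏ k, (lam (u k) * c)) = (∏ k, lam (u k)) * c ^ (p + 1) := by
      intro u
      rw [Finset.prod_mul_distrib, Finset.prod_const, Finset.card_univ, Fintype.card_fin]
    have h2 : (∑ u : Fin (p + 1) → S, Δsq (p + 1) u * ∏ k, (lam (u k) * c))
        = betasq Δsq lam (p + 1) * c ^ (p + 1) := by
      rw [betasq, Finset.sum_mul]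
      exact Finset.sum_congr rfl fun u _ => by rw [h1]; ring
    rw [h2]; ring
  rw [thetaFn]
  rw [tsum_congr hterm, Summable.tsum_sub (hSf.mul_left c) hSg, tsum_mul_left]
  rfl

end AuxLemmas

/-- **Lemma (recovering the single-species spherical Parisi functional).**
Under (H2) and (H3), for any admissible `(m,q)` with the diagonal array
`q̂_{j,s} = q_j`, the multi-species spherical Parisi functional equals the
single-species one computed from `ξ^single(x) = Σ_p β_p² x^p`. -/
theorem parisi_spherical_diagonal_reduction
    (lam : S → ℝ) (hlampos : ∀ s, 0 < lam s) (hlamsum : ∑ s, lam s = 1)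
    (Δsq : (p : ℕ) → (Fin p → S) → ℝ)
    (hΔnonneg : ∀ p s, 0 ≤ Δsq p s)
    (hΔsymm : ∀ (p : ℕ) (π : Equiv.Perm (Fin p)) (s : Fin p → S), Δsq p (s ∘ π) = Δsq p s)
    (H2 : ∃ ε > (0 : ℝ), Summable fun p : ℕ =>
      (1 + ε) ^ (p + 1) * betasq Δsq lam (p + 1))
    (H3a : ∀ t t' : S, Δsq 1 (fun _ => t) = Δsq 1 (fun _ => t'))
    (H3b : ∀ (n : ℕ) (t t' : S),
      (∑ s : Fin (n + 1) → S, Δsq (n + 2) (Fin.cons t s) * ∏ k, lam (s k)) =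
        ∑ s : Fin (n + 1) → S, Δsq (n + 2) (Fin.cons t' s) * ∏ k, lam (s k))
    (k : ℕ) (hk : 1 ≤ k) (m : ℕ → ℝ) (q : ℕ → ℝ)
    (hm0 : m 0 = 0) (hmk : m k = 1) (hmmono : ∀ j < k, m j < m (j + 1))
    (hq0 : q 0 = 0) (hqtop : q (k + 1) = 1) (hqmono : ∀ j ≤ k, q j ≤ q (j + 1)) :
    parisiSpherical lam k m (fun s => xiDerivS Δsq lam s) (thetaFn Δsq lam)
        (fun j _ => q j) =
      parisiSpherical (fun _ : PUnit => (1 : ℝ)) k m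
        (fun _ x => xiSingleDeriv (betasq Δsq lam) (x PUnit.unit))
        (fun x => x PUnit.unit * xiSingleDeriv (betasq Δsq lam) (x PUnit.unit) -
          xiSingle (betasq Δsq lam) (x PUnit.unit))
        (fun j _ => q j) := by
  classical
  set β := betasq Δsq lam with hβdef
  have hx : ∀ (s : S) (c : ℝ), xiDerivS Δsq lam s (fun _ => c) = xiSingleDeriv β c :=
    fun s c => xiDerivS_const Δsq lam hlamsum H3a H3b s c
  -- monotonicity / bounds for q
  have hqmono' : ∀ j, j ≤ k + 1 → ∀ i, i ≤ j → q i ≤ q j := by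
    intro j
    induction j with
    | zero => intro _ i hi; rw [Nat.le_zero.mp hi]
    | succ n ih =>
        intro hn1 i hi
        rcases Nat.eq_or_lt_of_le hi with h | h
        · rw [h]
        · have hin : i ≤ n := by omega
          have hnk : n ≤ k := by omega
          exact le_trans (ih (by omega) i hin) (hqmono n hnk)
  have hq01 : ∀ j, j ≤ k + 1 → 0 ≤ q j ∧ q j ≤ 1 := by
    intro j hj
    constructor
    · rw [← hq0]; exact hqmono' j hj 0 (Nat.zero_le _)
    · rw [← hqtop]; exact hqmono' (k + 1) le_rfl j hj
  -- single-species objects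
  set xs' : (PUnit → ℝ) → ℝ := fun x => xiSingleDeriv β (x PUnit.unit) with hxs'
  have hx' : ∀ j : ℕ, xs' (fun _ => q j) = xiSingleDeriv β (q j) := fun _ => rfl
  -- dcoef equality
  have hd : ∀ (s : S) (j : ℕ),
      dcoef k m (xiDerivS Δsq lam s) (fun j _ => q j) j
        = dcoef k m xs' (fun j _ => q j) j := by
    intro s j
    unfold dcoef
    refine Finset.sum_congr rfl fun j' _ => ?_
    simp only [hx, hxs']
  have hdfun : ∀ s : S,
      dcoef k m (xiDerivS Δsq lam s) (fun j _ => q j)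
        = dcoef k m xs' (fun j _ => q j) := fun s => funext (hd s)
  have hXfun : ∀ s : S,
      sphX k m (xiDerivS Δsq lam s) (fun j _ => q j)
        = sphX k m xs' (fun j _ => q j) := by
    intro s
    funext b
    simp only [sphX, hdfun s, hx, hxs']
  unfold parisiSpherical
  congr 1
  · -- infimum part
    have hset : ∀ s : S,
        (sphX k m (xiDerivS Δsq lam s) (fun j _ => q j) ''
            Set.Ioi (dcoef k m (xiDerivS Δsq lam s) (fun j _ => q j) 1))
          = (sphX k m xs' (fun j _ => q j) ''
              Set.Ioi (dcoef k m xs' (fun j _ => q j) 1)) := by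
      intro s
      rw [hXfun s, hd s 1]
    calc (∑ s, lam s *
          sInf (sphX k m (xiDerivS Δsq lam s) (fun j _ => q j) ''
            Set.Ioi (dcoef k m (xiDerivS Δsq lam s) (fun j _ => q j) 1)))
        = ∑ s, lam s *
            sInf (sphX k m xs' (fun j _ => q j) ''
              Set.Ioi (dcoef k m xs' (fun j _ => q j) 1)) :=
          Finset.sum_congr rfl fun s _ => by rw [hset s]
      _ = (∑ s, lam s) *
            sInf (sphX k m xs' (fun j _ => q j) ''
              Set.Ioi (dcoef k m xs' (fun j _ => q j) 1)) := by
          rw [Finset.sum_mul]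
      _ = _ := by
          rw [hlamsum, one_mul, Fintype.sum_unique, one_mul]
  · -- theta part
    congr 1
    refine Finset.sum_congr rfl fun j hj => ?_
    have hjk : j ≤ k := (Finset.mem_Icc.mp hj).2
    have h1 := hq01 j (by omega)
    have h2 := hq01 (j + 1) (by omega)
    have e1 := thetaFn_const Δsq lam hΔnonneg hlampos H2 (q j) h1.1 h1.2
    have e2 := thetaFn_const Δsq lam hΔnonneg hlampos H2 (q (j + 1)) h2.1 h2.2
    simp only [e1, e2, ← hβdef]

end SpinGlass
end
end
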